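/- A subgroup of SL(2,ℤ) of finite index is non-elementary; in particular it contains two hyperbolic elements with disjoint fixed point sets on the boundary. -/

import Mathlib

/-!
A finite-index subgroup `Γ` of `SL(2,ℤ)` contains unipotents `T = [[1,a],[0,1]]` and
`U = [[1,0],[b,1]]` with `a, b > 0`. No positive powers of them commute, since the `(0,0)` entries
of `TᵐUⁿ` and `UⁿTᵐ` differ by `m a n b`; so no finite-index subgroup of `Γ` is abelian.
Both `TU` and `UT` have trace `2 + ab > 2`, and a common eigenvector `v` would satisfy both fixed
point equations `b v₀² ∓ ab v₀v₁ - a v₁² = 0`, which force `v = 0`.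
-/

/-- An element of `SL(2,ℝ)` is hyperbolic if `|tr| > 2`. -/
def IsHyperbolic (g : Matrix.SpecialLinearGroup (Fin 2) ℝ) : Prop :=
  2 < |Matrix.trace (g : Matrix (Fin 2) (Fin 2) ℝ)|

/-- The fixed point set of `g ∈ SL(2,ℝ)` on the boundary `∂ℍ`, identified with the real
projective line: the projective classes of eigenvectors of `g`. -/
def boundaryFixedPoints (g : Matrix.SpecialLinearGroup (Fin 2) ℝ) :
    Set (Projectivization ℝ (Fin 2 → ℝ)) :=
  {x | ∃ (v : Fin 2 → ℝ) (hv : v ≠ 0) (c : ℝ),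
    Matrix.mulVec (g : Matrix (Fin 2) (Fin 2) ℝ) v = c • v ∧ x = Projectivization.mk ℝ v hv}

/-- A group is virtually abelian if it has an abelian subgroup of finite index.
A subgroup of `SL(2,ℝ)` is elementary if it is virtually abelian. -/
def VirtuallyAbelian (G : Type*) [Group G] : Prop :=
  ∃ H : Subgroup G, H.FiniteIndex ∧ ∀ a b : H, a * b = b * a

theorem not_virtuallyAbelian_of_pow_not_commute {G : Type*} [Group G] {x y : G}
    (h : ∀ m n : ℕ, 0 < m → 0 < n → ¬Commute (x ^ m) (y ^ n)) : ¬VirtuallyAbelian G := by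
  rintro ⟨H, hH, hcomm⟩
  obtain ⟨m, hm, -, hxm⟩ := H.exists_pow_mem_of_index_ne_zero hH.index_ne_zero x
  obtain ⟨n, hn, -, hyn⟩ := H.exists_pow_mem_of_index_ne_zero hH.index_ne_zero y
  exact h m n hm hn (congrArg Subtype.val (hcomm ⟨_, hxm⟩ ⟨_, hyn⟩))

local notation "e₁₂" =>
  Matrix.SpecialLinearGroup.transvection (Fin.zero_ne_one : (0 : Fin 2) ≠ 1)
local notation "e₂₁" =>
  Matrix.SpecialLinearGroup.transvection (Fin.zero_ne_one.symm : (1 : Fin 2) ≠ 0)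

namespace Matrix

/-- In the coordinate `z = v 0 / v 1` this is the fixed point equation `c z² + (d - a) z - b = 0`
of the Möbius map `z ↦ (a z + b) / (c z + d)` of `M = [[a, b], [c, d]]`. -/
theorem fixedPoint_equation_of_mulVec_eq_smul {R : Type*} [CommRing R]
    {M : Matrix (Fin 2) (Fin 2) R} {v : Fin 2 → R} {c : R} (h : M *ᵥ v = c • v) :
    M 1 0 * v 0 ^ 2 + (M 1 1 - M 0 0) * v 0 * v 1 - M 0 1 * v 1 ^ 2 = 0 := by
  have h0 := congrFun h 0
  have h1 := congrFun h 1
  simp only [mulVec, dotProduct, Fin.sum_univ_two, Pi.smul_apply, smul_eq_mul] at h0 h1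
  linear_combination v 0 * h1 - v 1 * h0

namespace SpecialLinearGroup

section transvection

variable {ι R : Type*} [DecidableEq ι] [Fintype ι] [CommRing R]

theorem transvection_pow {i j : ι} (hij : i ≠ j) (b : R) (n : ℕ) :
    transvection hij b ^ n = transvection hij (n * b) := by
  induction n with
  | zero => simp
  | succ n ih => rw [pow_succ, ih, ← transvection_add]; push_cast; ring_nf

theorem map_transvection {S : Type*} [CommRing S] (f : R →+* S) {i j : ι} (hij : i ≠ j)
    (b : R) :
    map f (transvection hij b) = transvection hij (f b) := by
  ext k l
  simp [transvection_coe, Matrix.single_apply, Matrix.one_apply, apply_ite f]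

theorem exists_transvection_mem_of_index_ne_zero {Γ : Subgroup (SpecialLinearGroup ι ℤ)}
    (hΓ : Γ.index ≠ 0) {i j : ι} (hij : i ≠ j) : ∃ b : ℤ, 0 < b ∧ transvection hij b ∈ Γ := by
  obtain ⟨n, hn, -, hmem⟩ := Γ.exists_pow_mem_of_index_ne_zero hΓ (transvection hij 1)
  exact ⟨n, by exact_mod_cast hn, by simpa [transvection_pow] using hmem⟩

end transvection

section SL2

variable {R : Type*} [CommRing R]

theorem coe_transvection_zero_one (b : R) :
    (e₁₂ b : Matrix (Fin 2) (Fin 2) R) = !![1, b; 0, 1] := by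
  ext i j; fin_cases i <;> fin_cases j <;> simp [transvection_coe]

theorem coe_transvection_one_zero (b : R) :
    (e₂₁ b : Matrix (Fin 2) (Fin 2) R) = !![1, 0; b, 1] := by
  ext i j; fin_cases i <;> fin_cases j <;> simp [transvection_coe]

theorem coe_transvection_zero_one_mul_one_zero (r s : R) :
    (e₁₂ r * e₂₁ s : Matrix (Fin 2) (Fin 2) R) = !![1 + r * s, r; s, 1] := by
  rw [coe_transvection_zero_one, coe_transvection_one_zero, mul_fin_two]
  ring_nf

theorem coe_transvection_one_zero_mul_zero_one (r s : R) :
    (e₂₁ s * e₁₂ r : Matrix (Fin 2) (Fin 2) R) = !![1, r; s, 1 + r * s] := by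
  rw [coe_transvection_zero_one, coe_transvection_one_zero, mul_fin_two]
  ring_nf

theorem commute_transvection_iff (r s : R) : Commute (e₁₂ r) (e₂₁ s) ↔ r * s = 0 := by
  rw [Commute, SemiconjBy, SpecialLinearGroup.ext_iff]
  simp [Fin.forall_fin_two, coe_transvection_zero_one_mul_one_zero,
    coe_transvection_one_zero_mul_zero_one]

end SL2

end SpecialLinearGroup

end Matrix

open scoped Matrix
open Matrix.SpecialLinearGroup

theorem mem_boundaryFixedPoints_mk_iff {g : Matrix.SpecialLinearGroup (Fin 2) ℝ} {v : Fin 2 → ℝ}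
    (hv : v ≠ 0) :
    Projectivization.mk ℝ v hv ∈ boundaryFixedPoints g ↔
      ∃ c : ℝ, (g : Matrix (Fin 2) (Fin 2) ℝ) *ᵥ v = c • v := by
  constructor
  · rintro ⟨w, hw, c, hwc, hvw⟩
    obtain ⟨a, rfl⟩ := (Projectivization.mk_eq_mk_iff ℝ _ _ hv hw).mp hvw
    exact ⟨c, by rw [Units.smul_def, Matrix.mulVec_smul, hwc, smul_comm]⟩
  · rintro ⟨c, hc⟩
    exact ⟨v, hv, c, hc, rfl⟩

theorem isHyperbolic_mul_comm {g h : Matrix.SpecialLinearGroup (Fin 2) ℝ} :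
    IsHyperbolic (g * h) ↔ IsHyperbolic (h * g) := by
  rw [IsHyperbolic, IsHyperbolic, coe_mul, coe_mul, Matrix.trace_mul_comm]

theorem isHyperbolic_transvection_mul {r s : ℝ} (h : 0 < r * s) :
    IsHyperbolic (e₁₂ r * e₂₁ s) := by
  rw [IsHyperbolic, coe_mul, coe_transvection_zero_one_mul_one_zero, Matrix.trace_fin_two]
  simp only [Matrix.of_apply, Matrix.cons_val', Matrix.cons_val_zero, Matrix.cons_val_fin_one,
    Matrix.cons_val_one]
  exact lt_abs.mpr (Or.inl (by linarith))

theorem boundaryFixedPoints_transvection_mul_inter_swap_eq_empty {r s : ℝ} (hrs : r * s ≠ 0) :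
    boundaryFixedPoints (e₁₂ r * e₂₁ s) ∩ boundaryFixedPoints (e₂₁ s * e₁₂ r) = ∅ := by
  refine Set.eq_empty_of_forall_notMem fun x ⟨hg, hh⟩ => x.rep_nonzero ?_
  rw [← x.mk_rep, mem_boundaryFixedPoints_mk_iff] at hg hh
  obtain ⟨c, hc⟩ := hg
  obtain ⟨d, hd⟩ := hh
  have hg := Matrix.fixedPoint_equation_of_mulVec_eq_smul hc
  have hh := Matrix.fixedPoint_equation_of_mulVec_eq_smul hd
  simp only [coe_mul, coe_transvection_zero_one_mul_one_zero,
    coe_transvection_one_zero_mul_zero_one, Matrix.of_apply, Matrix.cons_val', Matrix.cons_val_zero,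
    Matrix.cons_val_fin_one, Matrix.cons_val_one, sub_add_cancel_left, add_sub_cancel_left] at hg hh
  set v := x.rep
  have hprod : v 0 * v 1 = 0 := by
    have : r * s * (v 0 * v 1) = 0 := by linear_combination (hh - hg) / 2
    simpa [hrs] using this
  have hsq : s * v 0 ^ 2 = r * v 1 ^ 2 := by linear_combination (hg + hh) / 2
  have h0 : v 0 = 0 := by
    have : s * v 0 ^ 4 = 0 := by linear_combination v 0 ^ 2 * hsq + r * v 0 * v 1 * hprod
    simpa [right_ne_zero_of_mul hrs] using this
  have h1 : v 1 = 0 := by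
    have : r * v 1 ^ 4 = 0 := by linear_combination -v 1 ^ 2 * hsq + s * v 0 * v 1 * hprod
    simpa [left_ne_zero_of_mul hrs] using this
  ext i
  fin_cases i
  exacts [h0, h1]

/-- A finite-index subgroup of `SL(2,ℤ)` is non-elementary; in particular it
contains two hyperbolic elements with disjoint boundary fixed point sets. -/
theorem finiteIndex_subgroup_SL2Z_nonelementary
    (Γ : Subgroup (Matrix.SpecialLinearGroup (Fin 2) ℤ)) (hΓ : Γ.FiniteIndex) :
    ¬ VirtuallyAbelian Γ ∧
    ∃ g ∈ Γ, ∃ h ∈ Γ,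
      IsHyperbolic (Matrix.SpecialLinearGroup.map (Int.castRingHom ℝ) g) ∧
      IsHyperbolic (Matrix.SpecialLinearGroup.map (Int.castRingHom ℝ) h) ∧
      boundaryFixedPoints (Matrix.SpecialLinearGroup.map (Int.castRingHom ℝ) g) ∩
        boundaryFixedPoints (Matrix.SpecialLinearGroup.map (Int.castRingHom ℝ) h) = ∅ := by
  obtain ⟨a, ha, haΓ⟩ := exists_transvection_mem_of_index_ne_zero hΓ.index_ne_zero
    (Fin.zero_ne_one : (0 : Fin 2) ≠ 1)
  obtain ⟨b, hb, hbΓ⟩ := exists_transvection_mem_of_index_ne_zero hΓ.index_ne_zero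
    (Fin.zero_ne_one.symm : (1 : Fin 2) ≠ 0)
  have hab : (0 : ℝ) < a * b := by positivity
  refine ⟨not_virtuallyAbelian_of_pow_not_commute (x := ⟨_, haΓ⟩) (y := ⟨_, hbΓ⟩) ?_,
    _, mul_mem haΓ hbΓ, _, mul_mem hbΓ haΓ, ?_⟩
  · intro m n hm hn hcomm
    have hmn : m * a * (n * b) = 0 := by
      simpa only [map_pow, Subgroup.coe_subtype, transvection_pow, commute_transvection_iff]
        using hcomm.map Γ.subtype
    exact absurd hmn (by positivity)
  · simp only [map_mul, map_transvection, eq_intCast]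
    have hyp := isHyperbolic_transvection_mul hab
    exact ⟨hyp, isHyperbolic_mul_comm.mp hyp,
      boundaryFixedPoints_transvection_mul_inter_swap_eq_empty hab.ne'⟩
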